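/- Fix a countable relational language L with relation symbols R_i of arity a_i (i ∈ ℕ), and let X := ∏_{i∈ℕ} Bool^{(Fin a_i → ℕ)} be the Polish space of L-structures with domain ℕ (product topology, Bool discrete), equipped with its Borel σ-algebra. Then there exists a Borel-measurable function f: X → ℝ such that for all ω-categorical x, y ∈ X: x and y are fo-bi-definable (i.e., there exists a bijection θ: ℕ → ℕ with Aut(y) = {θ∘g∘θ⁻¹ : g ∈ Aut(x)}) if and only if f(x) = f(y). In other words, fo-bi-definability is smooth on the class of ω-categorical structures. -/

import Mathlib

/-- The topology of pointwise convergence on functions `α → β`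
(product topology with `β` discrete). -/
def FnTop (α β : Type*) : TopologicalSpace (α → β) :=
  @Pi.topologicalSpace α (fun _ => β) (fun _ => ⊥)

/-- The coordinatewise action of a permutation on tuples. -/
def tAct {Ω : Type*} (g : Equiv.Perm Ω) {n : ℕ} (u : Fin n → Ω) : Fin n → Ω :=
  fun i => g (u i)

/-- The action of a permutation on sets of tuples. -/
def sAct {Ω : Type*} (g : Equiv.Perm Ω) {n : ℕ} (c : Set (Fin n → Ω)) : Set (Fin n → Ω) :=
  tAct g '' c

/-- A set of permutations is oligomorphic if for every `n` its coordinatewise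
action on `n`-tuples has finitely many orbits. -/
def Oligo {Ω : Type*} (G : Set (Equiv.Perm Ω)) : Prop :=
  ∀ n : ℕ, Set.Finite {o : Set (Fin n → Ω) | ∃ t : Fin n → Ω, o = {s | ∃ g ∈ G, s = tAct g t}}

/-- `G` acts without algebraicity on `Ω`: if the orbit of `a` under the pointwise
stabiliser of a finite tuple `y` is finite, then `a` is an entry of `y`. -/
def NoAlg {Ω : Type*} (G : Set (Equiv.Perm Ω)) : Prop :=
  ∀ (m : ℕ) (y : Fin m → Ω) (a : Ω),
    Set.Finite {b : Ω | ∃ g ∈ G, (∀ i, g (y i) = y i) ∧ b = g a} → ∃ i, a = y i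

/-- `G` is topologically closed in the space of permutations with the topology of
pointwise convergence. -/
def TopClosedPerm {Ω : Type*} (G : Set (Equiv.Perm Ω)) : Prop :=
  @IsClosed (Ω → Ω) (FnTop Ω Ω) {f | ∃ g ∈ G, f = ⇑g}

/-- The `r`-equivalence class of a tuple `u ∈ U`. -/
def cls {Ω : Type*} {n : ℕ} (U : Set (Fin n → Ω))
    (r : (Fin n → Ω) → (Fin n → Ω) → Prop) (u : Fin n → Ω) : Set (Fin n → Ω) :=
  {v ∈ U | r u v}

/-- The quotient `B = U/∼`, realised as the set of equivalence classes. -/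
def classes {Ω : Type*} {n : ℕ} (U : Set (Fin n → Ω))
    (r : (Fin n → Ω) → (Fin n → Ω) → Prop) : Set (Set (Fin n → Ω)) :=
  {c | ∃ u ∈ U, c = cls U r u}

/-- `a` entangles the class `c` if `a` is an entry of every tuple in `c`. -/
def Entangles {Ω : Type*} {n : ℕ} (a : Ω) (c : Set (Fin n → Ω)) : Prop :=
  ∀ v ∈ c, ∃ i, v i = a

/-- `a` strongly entangles `c ∈ B` if it entangles `c` and no other element of `B`. -/
def StronglyEntangles {Ω : Type*} {n : ℕ} (B : Set (Set (Fin n → Ω))) (a : Ω)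
    (c : Set (Fin n → Ω)) : Prop :=
  Entangles a c ∧ ∀ c' ∈ B, Entangles a c' → c' = c

/-- `a` is algebraic over `c`: the orbit of `a` under the stabiliser `G_c` is finite. -/
def AlgebraicOver {Ω : Type*} {n : ℕ} (G : Set (Equiv.Perm Ω)) (a : Ω)
    (c : Set (Fin n → Ω)) : Prop :=
  Set.Finite {b : Ω | ∃ g ∈ G, sAct g c = c ∧ b = g a}

/-- `B` is dense: for every `a ∈ Ω` there are `c₁,…,c_k ∈ B` whose joint stabiliser
is contained in the stabiliser of `a`. -/
def DenseClasses {Ω : Type*} {n : ℕ} (G : Set (Equiv.Perm Ω))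
    (B : Set (Set (Fin n → Ω))) : Prop :=
  ∀ a : Ω, ∃ (k : ℕ) (cc : Fin k → Set (Fin n → Ω)),
    (∀ i, cc i ∈ B) ∧ ∀ g ∈ G, (∀ i, sAct g (cc i) = cc i) → g a = a

/-- The induced action of `G` on `B` is without algebraicity. -/
def NoAlgOn {Ω : Type*} {n : ℕ} (G : Set (Equiv.Perm Ω))
    (B : Set (Set (Fin n → Ω))) : Prop :=
  ∀ (m : ℕ) (cc : Fin m → Set (Fin n → Ω)) (c : Set (Fin n → Ω)),
    (∀ i, cc i ∈ B) → c ∈ B →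
    Set.Finite {c' | ∃ g ∈ G, (∀ i, sAct g (cc i) = cc i) ∧ c' = sAct g c} →
    ∃ i, c = cc i

/-- Codes for structures on `ℕ` in the countable relational language whose `i`-th
relation symbol has arity `a i`. -/
abbrev Codes (a : ℕ → ℕ) := ∀ i : ℕ, (Fin (a i) → ℕ) → Bool

/-- The product topology on the space of codes (`Bool` discrete), turning it into
a Polish space. -/
def XTop (a : ℕ → ℕ) : TopologicalSpace (Codes a) :=
  @Pi.topologicalSpace _ _ (fun _ => @Pi.topologicalSpace _ _ (fun _ => ⊥))

/-- The automorphisms of the structure coded by `x`: permutations of `ℕ`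
preserving each relation and its complement. -/
def AutX {a : ℕ → ℕ} (x : Codes a) : Set (Equiv.Perm ℕ) :=
  {g | ∀ (i : ℕ) (t : Fin (a i) → ℕ), x i (fun j => g (t j)) = x i t}

/-- The structure coded by `x` is ω-categorical. -/
def OmegaCatX {a : ℕ → ℕ} (x : Codes a) : Prop := Oligo (AutX x)

/-- `x` and `y` are fo-bi-definable: some bijection of `ℕ` conjugates the
automorphism group of `x` onto that of `y`. -/
def FoBiDef {a : ℕ → ℕ} (x y : Codes a) : Prop :=
  ∃ θ : Equiv.Perm ℕ,
    AutX y = (fun g : Equiv.Perm ℕ => θ.symm.trans (g.trans θ)) '' AutX x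

/-!
For ω-categorical `x`, two tuples lie in the same `AutX x`-orbit iff they have the same
back-and-forth type in `x`, and a bijection `θ` conjugates `AutX x` onto `AutX y` iff it is an
isomorphism between the orbit structures of `x` and `y`, whose relations are the orbit
equivalences on `k`-tuples. The orbit structures are again ω-categorical, so by the
back-and-forth method they are isomorphic iff their empty tuples have the same types of every
depth. A type of depth `m` of an `n`-tuple only looks at the first `n + 1` relation symbols, so
there are finitely many of them and each is a Borel function of the code; the sequence of types of
the empty tuple in the orbit structure, embedded into `ℝ`, is the required reduction.
-/

section tAct

variable {Ω : Type*} {n : ℕ}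

@[simp]
theorem tAct_apply (g : Equiv.Perm Ω) (u : Fin n → Ω) (i : Fin n) : tAct g u i = g (u i) := rfl

theorem tAct_snoc (g : Equiv.Perm Ω) (u : Fin n → Ω) (b : Ω) :
    tAct g (Fin.snoc u b) = Fin.snoc (tAct g u) (g b) := by
  funext i
  refine Fin.lastCases ?_ (fun i => ?_) i <;> simp

end tAct

theorem exists_equiv_apply_eq {ι α β : Type*} {S : ι → α} {T : ι → β}
    (hS : Function.Surjective S) (hT : Function.Surjective T)
    (hST : ∀ i j, S i = S j ↔ T i = T j) : ∃ θ : α ≃ β, ∀ i, θ (S i) = T i := by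
  refine ⟨⟨fun x => T (Function.surjInv hS x), fun y => S (Function.surjInv hT y),
    fun x => ?_, fun y => ?_⟩, fun i => (hST _ _).1 (Function.surjInv_eq hS (S i))⟩
  · exact ((hST _ _).2 (Function.surjInv_eq hT _)).trans (Function.surjInv_eq hS x)
  · exact ((hST _ _).1 (Function.surjInv_eq hS _)).trans (Function.surjInv_eq hT y)

section BackAndForth

variable {P : ∀ {n : ℕ}, (Fin n → ℕ) → (Fin n → ℕ) → Prop}
  (forth : ∀ {n} {u w : Fin n → ℕ}, P u w → ∀ b, ∃ b', P (Fin.snoc u b) (Fin.snoc w b'))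
  (back : ∀ {n} {u w : Fin n → ℕ}, P u w → ∀ b', ∃ b, P (Fin.snoc u b) (Fin.snoc w b'))
  {n₀ : ℕ} {u₀ w₀ : Fin n₀ → ℕ} (h₀ : P u₀ w₀)

/-- Round `k + 1` of the back-and-forth construction puts `k` into the domain, then into the
range. -/
noncomputable def backAndForthChain :
    (k : ℕ) → {p : (Fin (n₀ + 2 * k) → ℕ) × (Fin (n₀ + 2 * k) → ℕ) // P p.1 p.2}
  | 0 => ⟨(u₀, w₀), h₀⟩
  | k + 1 =>
    let p := backAndForthChain k
    let hb' := forth p.2 k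
    let hb := back (Classical.choose_spec hb') k
    ⟨(Fin.snoc (Fin.snoc p.1.1 k) (Classical.choose hb),
      Fin.snoc (Fin.snoc p.1.2 (Classical.choose hb')) k), Classical.choose_spec hb⟩

theorem backAndForthChain_apply_of_le {k k' : ℕ} (hk : k ≤ k') {i : ℕ} (hi : i < n₀ + 2 * k) :
    (backAndForthChain forth back h₀ k').1.1 ⟨i, by omega⟩ =
        (backAndForthChain forth back h₀ k).1.1 ⟨i, hi⟩ ∧
      (backAndForthChain forth back h₀ k').1.2 ⟨i, by omega⟩ =
        (backAndForthChain forth back h₀ k).1.2 ⟨i, hi⟩ := by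
  induction k', hk using Nat.le_induction with
  | base => exact ⟨rfl, rfl⟩
  | succ k' hk ih =>
    have hi' : i < n₀ + 2 * k' := by omega
    simp only [backAndForthChain]
    rw [show (⟨i, _⟩ : Fin (n₀ + 2 * (k' + 1))) = Fin.castSucc (Fin.castSucc ⟨i, hi'⟩) from rfl,
      Fin.snoc_castSucc, Fin.snoc_castSucc, Fin.snoc_castSucc, Fin.snoc_castSucc]
    exact ih

end BackAndForth

theorem exists_perm_of_backAndForth {P : ∀ {n : ℕ}, (Fin n → ℕ) → (Fin n → ℕ) → Prop}
    (hP : ∀ {n} {u w : Fin n → ℕ}, P u w → ∀ i j, u i = u j ↔ w i = w j)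
    (forth : ∀ {n} {u w : Fin n → ℕ}, P u w → ∀ b, ∃ b', P (Fin.snoc u b) (Fin.snoc w b'))
    (back : ∀ {n} {u w : Fin n → ℕ}, P u w → ∀ b', ∃ b, P (Fin.snoc u b) (Fin.snoc w b'))
    {n₀ : ℕ} {u₀ w₀ : Fin n₀ → ℕ} (h₀ : P u₀ w₀) :
    ∃ θ : Equiv.Perm ℕ, tAct θ u₀ = w₀ ∧
      ∀ N, ∃ n ≥ N, ∃ u : Fin n → ℕ, (∀ v < N, v ∈ Set.range u) ∧ P u (tAct θ u) := by
  set chain := backAndForthChain forth back h₀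
  -- the limits of the two sides of the chain: enumerations of `ℕ` with the same equality pattern
  let S : ℕ → ℕ := fun i => (chain (i + 1)).1.1 ⟨i, by omega⟩
  let T : ℕ → ℕ := fun i => (chain (i + 1)).1.2 ⟨i, by omega⟩
  have chain_eq : ∀ k, (chain k).1 = (fun i : Fin _ => S i, fun i : Fin _ => T i) := fun k =>
    Prod.ext (funext fun i =>
      (backAndForthChain_apply_of_le forth back h₀ (le_max_left k (i + 1)) i.2).1.symm.trans
        (backAndForthChain_apply_of_le forth back h₀ (le_max_right k (i + 1)) _).1)
    (funext fun i =>
      (backAndForthChain_apply_of_le forth back h₀ (le_max_left k (i + 1)) i.2).2.symm.trans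
        (backAndForthChain_apply_of_le forth back h₀ (le_max_right k (i + 1)) _).2)
  have hPS : ∀ k, P (fun i : Fin (n₀ + 2 * k) => S i) (fun i => T i) := fun k => by
    simpa only [chain_eq k] using (chain k).2
  have hS : ∀ k, S (n₀ + 2 * k) = k := fun k => by
    refine (backAndForthChain_apply_of_le forth back h₀ (k := k + 1) (by omega) (by omega)).1.trans
      ?_
    rw [show (⟨n₀ + 2 * k, _⟩ : Fin (n₀ + 2 * (k + 1))) = Fin.castSucc (Fin.last _) from rfl]
    simp only [backAndForthChain, Fin.snoc_castSucc, Fin.snoc_last]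
  have hT : ∀ k, T (n₀ + 2 * k + 1) = k := fun k => by
    refine (backAndForthChain_apply_of_le forth back h₀ (k := k + 1) (by omega) (by omega)).2.trans
      ?_
    rw [show (⟨n₀ + 2 * k + 1, _⟩ : Fin (n₀ + 2 * (k + 1))) = Fin.last _ from rfl]
    simp only [backAndForthChain, Fin.snoc_last]
  obtain ⟨θ, hθ⟩ := exists_equiv_apply_eq (fun k => ⟨_, hS k⟩) (fun k => ⟨_, hT k⟩)
    fun i j => hP (hPS (i + j + 1)) ⟨i, by omega⟩ ⟨j, by omega⟩
  have tAct_S : ∀ k, tAct θ (fun i : Fin (n₀ + 2 * k) => S i) = fun i : Fin _ => T i :=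
    fun k => funext fun i => hθ i
  refine ⟨θ, ?_, fun N => ⟨n₀ + 2 * N, by omega, fun i => S i,
    fun v hv => ⟨⟨n₀ + 2 * v, by omega⟩, hS v⟩, (tAct_S N).symm ▸ hPS N⟩⟩
  have h0 := chain_eq 0
  simp only [chain, backAndForthChain, Prod.ext_iff] at h0
  rw [h0.1, h0.2]
  exact tAct_S 0

open Filter in
theorem Oligo.exists_subset_iInter_of_antitone {Ω : Type*} {G : Set (Equiv.Perm Ω)} (hG : Oligo G)
    (h1 : 1 ∈ G) {n : ℕ} {T : ℕ → Set (Fin n → Ω)} (hT : Antitone T)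
    (hGT : ∀ m, ∀ w ∈ T m, ∀ g ∈ G, tAct g w ∈ T m) : ∃ M, T M ⊆ ⋂ m, T m := by
  -- each `T m` is a union of orbits, and there are finitely many orbits to lose
  have stable : ∀ o ∈ {o : Set (Fin n → Ω) | ∃ t, o = {s | ∃ g ∈ G, s = tAct g t}},
      ∀ᶠ M in atTop, o ⊆ T M → ∀ m, o ⊆ T m := by
    intro o _
    by_cases h : ∀ m, o ⊆ T m
    · exact Eventually.of_forall fun _ _ => h
    · obtain ⟨m₀, hm₀⟩ := not_forall.1 h
      exact eventually_atTop.2 ⟨m₀, fun M hM ho => absurd (ho.trans (hT hM)) hm₀⟩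
  obtain ⟨M, hM⟩ := ((eventually_all_finite (hG n)).2 stable).exists
  refine ⟨M, fun w hw => Set.mem_iInter.2 fun m => hM _ ⟨w, rfl⟩ ?_ m ⟨1, h1, rfl⟩⟩
  rintro _ ⟨g, hg, rfl⟩
  exact hGT M w hw g hg

abbrev RelStr (c : ℕ → ℕ) := ∀ k : ℕ, (Fin (c k) → ℕ) → Prop

namespace RelStr

variable {c : ℕ → ℕ}

def IsIso (θ : Equiv.Perm ℕ) (A B : RelStr c) : Prop :=
  ∀ k t, A k t ↔ B k (tAct θ t)

def aut (A : RelStr c) : Set (Equiv.Perm ℕ) := {g | IsIso g A A}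

theorem IsIso.symm {θ : Equiv.Perm ℕ} {A B : RelStr c} (h : IsIso θ A B) :
    IsIso θ.symm B A := fun k t => by
  convert (h k (tAct θ.symm t)).symm
  funext i; simp

theorem one_mem_aut (A : RelStr c) : (1 : Equiv.Perm ℕ) ∈ aut A := fun _ _ => Iff.rfl

/-- Only the first `n + 1` relation symbols are recorded, so that there are finitely many atomic
types of `n`-tuples. -/
def AtomicType (c : ℕ → ℕ) (n : ℕ) : Type :=
  (Fin n → Fin n → Prop) × ((k : Fin (n + 1)) → (Fin (c k) → Fin n) → Prop)

def TypeSpace (c : ℕ → ℕ) : ℕ → ℕ → Type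
  | 0, n => AtomicType c n
  | m + 1, n => AtomicType c n × Set (TypeSpace c m (n + 1))

instance (n : ℕ) : Finite (AtomicType c n) := by
  unfold AtomicType; infer_instance

instance : ∀ m n, Finite (TypeSpace c m n)
  | 0, n => inferInstanceAs (Finite (AtomicType c n))
  | m + 1, n =>
    have := instFiniteTypeSpace m (n + 1)
    inferInstanceAs (Finite (AtomicType c n × Set (TypeSpace c m (n + 1))))

def atp (A : RelStr c) {n : ℕ} (u : Fin n → ℕ) : AtomicType c n :=
  (fun i j => u i = u j, fun k τ => A k (u ∘ τ))

def tp (A : RelStr c) : (m : ℕ) → {n : ℕ} → (Fin n → ℕ) → TypeSpace c m n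
  | 0, _, u => atp A u
  | m + 1, _, u => (atp A u, Set.range fun b => tp A m (Fin.snoc u b))

def SameType (A B : RelStr c) {n : ℕ} (u w : Fin n → ℕ) : Prop :=
  ∀ m, tp A m u = tp B m w

section

variable {A B : RelStr c} {n : ℕ} {u w : Fin n → ℕ}

theorem atp_eq_iff {d : AtomicType c n} :
    atp A u = d ↔ (∀ i j, u i = u j ↔ d.1 i j) ∧ ∀ (k : Fin (n + 1)) τ, A k (u ∘ τ) ↔ d.2 k τ :=
  Prod.ext_iff.trans <| by simp only [atp, funext_iff, eq_iff_iff]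

theorem eq_iff_eq_of_atp_eq (h : atp A u = atp B w) (i j : Fin n) : u i = u j ↔ w i = w j :=
  Iff.of_eq (congrFun (congrFun (congrArg Prod.fst h) i) j)

theorem rel_iff_of_atp_eq (h : atp A u = atp B w) {k : ℕ} (hk : k ≤ n)
    (τ : Fin (c k) → Fin n) : A k (u ∘ τ) ↔ B k (w ∘ τ) :=
  Iff.of_eq (congrFun (congrFun (congrArg Prod.snd h) ⟨k, by omega⟩) τ)

theorem atp_eq_of_tp_eq {m : ℕ} (h : tp A m u = tp B m w) : atp A u = atp B w := by
  cases m with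
  | zero => exact h
  | succ m => exact congrArg Prod.fst h

theorem tp_succ_eq_iff {m : ℕ} {d : TypeSpace c (m + 1) n} :
    tp A (m + 1) u = d ↔
      atp A u = d.1 ∧ ∀ d', (∃ b, tp A m (Fin.snoc u b) = d') ↔ d' ∈ d.2 :=
  Prod.ext_iff.trans <| and_congr_right' Set.ext_iff

theorem tp_succ_eq_tp_succ_iff {m : ℕ} :
    tp A (m + 1) u = tp B (m + 1) w ↔ atp A u = atp B w ∧
      (∀ b, ∃ b', tp A m (Fin.snoc u b) = tp B m (Fin.snoc w b')) ∧
      (∀ b', ∃ b, tp A m (Fin.snoc u b) = tp B m (Fin.snoc w b')) := by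
  refine tp_succ_eq_iff.trans <| and_congr_right' ⟨fun h => ⟨fun b => ?_, fun b' => ?_⟩, ?_⟩
  · obtain ⟨b', hb'⟩ := (h _).1 ⟨b, rfl⟩
    exact ⟨b', hb'.symm⟩
  · exact (h _).2 ⟨b', rfl⟩
  · rintro ⟨forth, back⟩ d
    constructor
    · rintro ⟨b, rfl⟩
      obtain ⟨b', hb'⟩ := forth b
      exact ⟨b', hb'.symm⟩
    · rintro ⟨b', rfl⟩
      exact back b'

theorem tp_eq_of_tp_succ_eq : ∀ {m n : ℕ} {u w : Fin n → ℕ},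
    tp A (m + 1) u = tp B (m + 1) w → tp A m u = tp B m w
  | 0, _, _, _, h => atp_eq_of_tp_eq h
  | m + 1, _, _, _, h => by
    obtain ⟨hatp, forth, back⟩ := tp_succ_eq_tp_succ_iff.1 h
    refine tp_succ_eq_tp_succ_iff.2 ⟨hatp, fun b => ?_, fun b' => ?_⟩
    · obtain ⟨b', hb'⟩ := forth b
      exact ⟨b', tp_eq_of_tp_succ_eq hb'⟩
    · obtain ⟨b, hb⟩ := back b'
      exact ⟨b, tp_eq_of_tp_succ_eq hb⟩

theorem tp_eq_of_le {m m' : ℕ} (hm : m ≤ m') (h : tp A m' u = tp B m' w) : tp A m u = tp B m w := by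
  induction m', hm using Nat.le_induction with
  | base => exact h
  | succ m' _ ih => exact ih (tp_eq_of_tp_succ_eq h)

theorem tp_tAct_of_isIso {θ : Equiv.Perm ℕ} (hθ : IsIso θ A B) :
    ∀ m {n : ℕ} (u : Fin n → ℕ), tp A m u = tp B m (tAct θ u)
  | 0, _, u => atp_eq_iff.2 ⟨fun i j => θ.injective.eq_iff.symm, fun k τ => hθ k (u ∘ τ)⟩
  | m + 1, _, u => by
    refine tp_succ_eq_tp_succ_iff.2
      ⟨tp_tAct_of_isIso hθ 0 u, fun b => ⟨θ b, ?_⟩, fun b' => ⟨θ.symm b', ?_⟩⟩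
    · rw [← tAct_snoc]
      exact tp_tAct_of_isIso hθ m _
    · simpa [tAct_snoc] using tp_tAct_of_isIso hθ m (Fin.snoc u (θ.symm b'))

theorem SameType.symm (h : SameType A B u w) : SameType B A w u := fun m => (h m).symm

theorem sameType_tAct_of_isIso {θ : Equiv.Perm ℕ} (hθ : IsIso θ A B) (u : Fin n → ℕ) :
    SameType A B u (tAct θ u) := fun m => tp_tAct_of_isIso hθ m u

theorem SameType.exists_snoc_right (hB : Oligo (aut B)) (h : SameType A B u w) (b : ℕ) :
    ∃ b', SameType A B (Fin.snoc u b) (Fin.snoc w b') := by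
  obtain ⟨M, hM⟩ := hB.exists_subset_iInter_of_antitone (one_mem_aut B)
    (T := fun m => {w' | tp A m (Fin.snoc u b) = tp B m w'})
    (fun m m' hm w' hw' => tp_eq_of_le hm hw')
    (fun m w' hw' g hg => hw'.trans (tp_tAct_of_isIso hg m w'))
  obtain ⟨b', hb'⟩ := (tp_succ_eq_tp_succ_iff.1 (h (M + 1))).2.1 b
  exact ⟨b', Set.mem_iInter.1 (hM hb')⟩

theorem SameType.exists_snoc_left (hA : Oligo (aut A)) (h : SameType A B u w) (b' : ℕ) :
    ∃ b, SameType A B (Fin.snoc u b) (Fin.snoc w b') :=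
  (h.symm.exists_snoc_right hA b').imp fun _ hb => hb.symm

theorem mul_mem_aut {g h : Equiv.Perm ℕ} (hg : g ∈ aut A) (hh : h ∈ aut A) : g * h ∈ aut A :=
  fun k t => (hh k t).trans (hg k (tAct h t))

theorem oligo_aut_of_subset {G : Set (Equiv.Perm ℕ)} (hG : Oligo G) (h1 : 1 ∈ G)
    (hGA : G ⊆ aut A) : Oligo (aut A) := by
  intro n
  refine ((hG n).image fun o => {s | ∃ g ∈ aut A, ∃ t ∈ o, s = tAct g t}).subset ?_
  rintro _ ⟨t, rfl⟩
  refine ⟨_, ⟨t, rfl⟩, Set.ext fun s => ⟨?_, ?_⟩⟩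
  · rintro ⟨g, hg, _, ⟨h, hh, rfl⟩, rfl⟩
    exact ⟨g * h, mul_mem_aut hg (hGA hh), rfl⟩
  · rintro ⟨g, hg, rfl⟩
    exact ⟨g, hg, t, ⟨1, h1, rfl⟩, rfl⟩

theorem SameType.exists_isIso (hA : Oligo (aut A)) (hB : Oligo (aut B)) (h : SameType A B u w) :
    ∃ θ : Equiv.Perm ℕ, tAct θ u = w ∧ IsIso θ A B := by
  obtain ⟨θ, hθu, hθ⟩ := exists_perm_of_backAndForth (P := fun u w => SameType A B u w)
    (fun h => eq_iff_eq_of_atp_eq (atp_eq_of_tp_eq (h 0)))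
    (fun h => h.exists_snoc_right hB) (fun h => h.exists_snoc_left hA) h
  refine ⟨θ, hθu, fun k t => ?_⟩
  obtain ⟨n, hn, v, hv, hvθ⟩ := hθ (k + 1 + ∑ j, t j)
  choose τ hτ using fun j => hv (t j) <| by
    have := Finset.single_le_sum (fun j _ => Nat.zero_le (t j)) (Finset.mem_univ j)
    omega
  have hvτ : v ∘ τ = t := funext hτ
  have hθvτ : tAct θ v ∘ τ = tAct θ t := by rw [← hvτ]; rfl
  simpa only [hvτ, hθvτ] using rel_iff_of_atp_eq (atp_eq_of_tp_eq (hvθ 0)) (by omega) τ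

theorem SameType.exists_mem_aut (hA : Oligo (aut A)) (h : SameType A A u w) :
    ∃ g ∈ aut A, tAct g u = w :=
  let ⟨g, hgu, hg⟩ := h.exists_isIso hA hA
  ⟨g, hg, hgu⟩

end

instance {m n : ℕ} : MeasurableSpace (TypeSpace c m n) := ⊤

instance {m n : ℕ} : DiscreteMeasurableSpace (TypeSpace c m n) := ⟨fun _ => trivial⟩

section

variable {n : ℕ} {α : Type*} [MeasurableSpace α] {A : α → RelStr c}

theorem measurable_atp_eq (hA : ∀ k t, Measurable fun x => A x k t) (u : Fin n → ℕ)
    (d : AtomicType c n) : Measurable fun x => atp (A x) u = d := by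
  simp only [atp_eq_iff]
  exact measurable_const.and <| .forall fun k => .forall fun τ => (hA k _).iff measurable_const

theorem measurable_tp_eq (hA : ∀ k t, Measurable fun x => A x k t) :
    ∀ m {n} (u : Fin n → ℕ) (d : TypeSpace c m n), Measurable fun x => tp (A x) m u = d
  | 0, _, u, d => measurable_atp_eq hA u d
  | m + 1, _, u, d => by
    simp only [tp_succ_eq_iff]
    exact (measurable_atp_eq hA u _).and <| .forall fun d' =>
      (Measurable.exists fun b => measurable_tp_eq hA m _ d').iff measurable_const

theorem measurable_tp (hA : ∀ k t, Measurable fun x => A x k t) (m : ℕ) (u : Fin n → ℕ) :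
    Measurable fun x => tp (A x) m u :=
  measurable_to_countable' fun d => measurableSet_setOfPred.2 (measurable_tp_eq hA m u d)

theorem measurable_sameType (hA : ∀ k t, Measurable fun x => A x k t) (u w : Fin n → ℕ) :
    Measurable fun x => SameType (A x) (A x) u w :=
  .forall fun m => (measurable_tp hA m u).eq (measurable_tp hA m w)

end

end RelStr

namespace Codes

open RelStr

variable {a : ℕ → ℕ} {x y : Codes a}

def rel (x : Codes a) : RelStr a := fun k t => x k t = true

theorem aut_rel (x : Codes a) : aut (rel x) = AutX x := by
  ext g
  exact forall₂_congr fun _ _ => Iff.comm.trans Bool.eq_iff_iff.symm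

theorem mem_aut_rel {g : Equiv.Perm ℕ} : g ∈ aut (rel x) ↔ g ∈ AutX x := by
  rw [aut_rel]

/-- `s ++ t` satisfies the `k`-th relation when the `k`-tuples `s` and `t` have the same type in
`x`, which for ω-categorical `x` means that they lie in one `AutX x`-orbit (`orbRel_iff`). Types
rather than orbits make it depend measurably on `x`. -/
def orbRel (x : Codes a) : RelStr (fun k => k + k) := fun k w =>
  SameType (rel x) (rel x) (fun i => w (Fin.castAdd k i)) (fun i => w (Fin.natAdd k i))

theorem orbRel_append {k : ℕ} (s t : Fin k → ℕ) :
    orbRel x k (Fin.append s t) ↔ SameType (rel x) (rel x) s t := by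
  simp only [orbRel, Fin.append_left, Fin.append_right]

theorem orbRel_iff (hx : OmegaCatX x) {k : ℕ} (w : Fin (k + k) → ℕ) :
    orbRel x k w ↔
      ∃ g ∈ AutX x, tAct g (fun i => w (Fin.castAdd k i)) = fun i => w (Fin.natAdd k i) := by
  rw [← aut_rel]
  refine ⟨fun h => h.exists_mem_aut (aut_rel x ▸ hx), ?_⟩
  rintro ⟨g, hg, hgw⟩
  rw [orbRel, ← hgw]
  exact sameType_tAct_of_isIso hg _

theorem autX_subset_aut_orbRel (x : Codes a) : AutX x ⊆ aut (orbRel x) := by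
  intro g hg k w
  rw [← mem_aut_rel] at hg
  exact ⟨fun h m => (tp_tAct_of_isIso hg m _).symm.trans ((h m).trans (tp_tAct_of_isIso hg m _)),
    fun h m => (tp_tAct_of_isIso hg m _).trans ((h m).trans (tp_tAct_of_isIso hg m _).symm)⟩

theorem oligo_aut_orbRel (hx : OmegaCatX x) : Oligo (aut (orbRel x)) :=
  oligo_aut_of_subset hx (fun _ _ => rfl) (autX_subset_aut_orbRel x)

theorem conj_mem_autX_of_isIso (hy : OmegaCatX y) {θ : Equiv.Perm ℕ}
    (hθ : IsIso θ (orbRel x) (orbRel y)) {g : Equiv.Perm ℕ} (hg : g ∈ AutX x) :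
    θ.symm.trans (g.trans θ) ∈ AutX y := by
  intro r t
  have hx : orbRel x (a r) (Fin.append (tAct θ.symm t) (tAct g (tAct θ.symm t))) :=
    (orbRel_append _ _).2 (sameType_tAct_of_isIso (mem_aut_rel.2 hg) _)
  obtain ⟨h, hh, hht⟩ := (orbRel_iff hy _).1 ((hθ _ _).1 hx)
  simp only [tAct_apply, Fin.append_left, Fin.append_right, Equiv.apply_symm_apply] at hht
  rw [← hh r t]
  congr 1
  funext j
  exact (congrFun hht j).symm

theorem foBiDef_iff_exists_isIso (hx : OmegaCatX x) (hy : OmegaCatX y) :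
    FoBiDef x y ↔ ∃ θ, IsIso θ (orbRel x) (orbRel y) := by
  refine ⟨fun ⟨θ, hθ⟩ => ⟨θ, fun k w => ?_⟩, fun ⟨θ, hθ⟩ => ⟨θ, ?_⟩⟩
  · rw [orbRel_iff hx, orbRel_iff hy, hθ]
    simp only [Set.exists_mem_image, funext_iff, tAct_apply, Equiv.trans_apply,
      Equiv.symm_apply_apply, θ.injective.eq_iff]
  · refine Set.Subset.antisymm (fun h hh => ⟨_, conj_mem_autX_of_isIso hx hθ.symm hh, ?_⟩) ?_
    · ext; simp
    · rintro _ ⟨g, hg, rfl⟩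
      exact conj_mem_autX_of_isIso hy hθ hg

theorem foBiDef_iff_sameType (hx : OmegaCatX x) (hy : OmegaCatX y) :
    FoBiDef x y ↔ SameType (orbRel x) (orbRel y) ![] ![] := by
  rw [foBiDef_iff_exists_isIso hx hy]
  refine ⟨fun ⟨θ, hθ⟩ => ?_, fun h => ?_⟩
  · simpa only [Subsingleton.elim (tAct θ ![]) ![]] using sameType_tAct_of_isIso hθ ![]
  · obtain ⟨θ, -, hθ⟩ := h.exists_isIso (oligo_aut_orbRel hx) (oligo_aut_orbRel hy)
    exact ⟨θ, hθ⟩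

variable [MeasurableSpace (Codes a)] [OpensMeasurableSpace (Codes a)]

theorem measurable_rel (k : ℕ) (t : Fin (a k) → ℕ) : Measurable fun x : Codes a => rel x k t := by
  have hc : Continuous fun x : Codes a => x k t := by fun_prop
  exact hc.measurable.eq_const true

theorem measurable_orbRel (k : ℕ) (w : Fin (k + k) → ℕ) :
    Measurable fun x : Codes a => orbRel x k w :=
  RelStr.measurable_sameType (fun k t => measurable_rel k t) _ _

end Codes

/-- fo-bi-definability is a smooth equivalence relation on the class of
ω-categorical structures: it Borel-reduces to equality on `ℝ`. -/
theorem foBiDefinability_smooth (a : ℕ → ℕ) :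
    ∃ f : Codes a → ℝ,
      @Measurable (Codes a) ℝ (@borel (Codes a) (XTop a)) Real.measurableSpace f ∧
      ∀ x y : Codes a, OmegaCatX x → OmegaCatX y → (FoBiDef x y ↔ f x = f y) := by
  let _ : MeasurableSpace (Codes a) := borel (Codes a)
  have _ : BorelSpace (Codes a) := ⟨rfl⟩
  let F : Codes a → ∀ m, RelStr.TypeSpace (fun k => k + k) m 0 :=
    fun x m => RelStr.tp (Codes.orbRel x) m ![]
  have hF : Measurable F := measurable_pi_lambda _ fun m =>
    RelStr.measurable_tp (fun k w => Codes.measurable_orbRel k w) m _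
  have hemb :=
    MeasureTheory.measurableEmbedding_embeddingReal (∀ m, RelStr.TypeSpace (fun k => k + k) m 0)
  refine ⟨MeasureTheory.embeddingReal _ ∘ F, hemb.measurable.comp hF, fun x y hx hy => ?_⟩
  rw [Codes.foBiDef_iff_sameType hx hy, Function.comp_apply, Function.comp_apply,
    hemb.injective.eq_iff, funext_iff]
  rfl
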